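/- Consider a loop with trip count TC partially unrolled with factor UF, 1 ≤ UF ≤ TC, and executed in a non-pipelined fashion, where the UF-fold replicated loop body L′ contains an embedded copy of the single loop body L (an injective map preserving dependence edges, latencies and operation types). Let D ∈ ℕ be the latency lower bound LB(L) of the single body L (the maximum of its latency-weighted critical path and its per-type work bounds ⌈(∑ lat)/R o⌉ under resource bounds R). If the n = ⌊TC / UF⌋ groups are executed sequentially, each group being a schedule of L′ respecting its dependences and the resource constraint R, then the total latency is at least ⌊TC / UF⌋ × D. -/

import Mathlib

/-!
Every group is a schedule of the replicated body `L'`, so its length bounds `LB(L')` from above: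
a dependence chain occupies consecutive, non-overlapping intervals of the group, and by double
counting over the cycles of the group, the work of each operation type is at most `R o` times its
length. Since `L` embeds into `L'`, `LB(L) ≤ LB(L')`. Summing over the groups, which run one after
the other, gives `⌊TC / UF⌋ * LB(L)`.
-/

/-- `IsChainOn E v` says that `v 0, v 1, …, v k` is a dependence chain for the
dependence relation `E`. -/
def IsChainOn {V : Type*} (E : V → V → Prop) {k : ℕ} (v : Fin (k + 1) → V) : Prop :=
  ∀ i : Fin k, E (v i.castSucc) (v i.succ)

/-- The latency lower bound `LB` of a finite operation set `(V, E, lat, typ)`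
under resource bounds `R` : the maximum of (a) the supremum, over all
dependence chains, of the sum of the latencies along the chain, and (b) the
maximum over operation types `o` of `⌈(∑_{typ v = o} lat v) / R o⌉`
(valued in `ℕ∞` so that the supremum over chains always exists). -/
noncomputable def latLB {V Op : Type*} [Fintype V] [Fintype Op] [DecidableEq Op]
    (E : V → V → Prop) (lat : V → ℕ) (typ : V → Op) (R : Op → ℕ) : ℕ∞ :=
  max
    (⨆ (k : ℕ) (v : Fin (k + 1) → V) (_ : IsChainOn E v), ((∑ i, lat (v i) : ℕ) : ℕ∞))
    ((Finset.univ.sup fun o : Op =>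
        ((∑ v ∈ Finset.univ.filter (fun v => typ v = o), lat v) + R o - 1) / R o : ℕ) : ℕ∞)

open Finset

theorem IsChainOn.map {V W : Type*} {E : V → V → Prop} {F : W → W → Prop} {f : V → W}
    (hf : ∀ v w, E v w → F (f v) (f w)) {k : ℕ} {v : Fin (k + 1) → V} (hv : IsChainOn E v) :
    IsChainOn F (f ∘ v) :=
  fun i => hf _ _ (hv i)

section Schedule

variable {V Op : Type*} {E : V → V → Prop} {lat : V → ℕ} {start : V → ℕ} {a b : ℕ}

theorem IsChainOn.start_add_sum_le (hE : ∀ v w, E v w → start v + lat v ≤ start w) :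
    ∀ {k : ℕ} {v : Fin (k + 1) → V}, IsChainOn E v →
      start (v 0) + ∑ i, lat (v i) ≤ start (v (Fin.last k)) + lat (v (Fin.last k))
  | 0, _, _ => by simp
  | k + 1, v, hv => by
    have htail : start (v 1) + ∑ i : Fin (k + 1), lat (v i.succ) ≤
        start (v (Fin.last (k + 1))) + lat (v (Fin.last (k + 1))) :=
      IsChainOn.start_add_sum_le hE (v := fun i => v i.succ) fun i => by
        simpa only [Fin.succ_castSucc] using hv i.succ
    have hhead : start (v 0) + lat (v 0) ≤ start (v 1) := hE _ _ (hv 0)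
    rw [Fin.sum_univ_succ]
    omega

theorem IsChainOn.sum_le_of_schedule (hwithin : ∀ v, a ≤ start v ∧ start v + lat v ≤ b)
    (hE : ∀ v w, E v w → start v + lat v ≤ start w) {k : ℕ} {v : Fin (k + 1) → V}
    (hv : IsChainOn E v) : ∑ i, lat (v i) ≤ b - a := by
  have := hv.start_add_sum_le hE
  have := (hwithin (v 0)).1
  have := (hwithin (v (Fin.last k))).2
  omega

/-- Counting the pairs (operation, cycle of `[a, b)` during which it executes) both ways. -/
theorem sum_lat_le_mul_of_card_executing_le (S : Finset V) (r : ℕ)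
    (hwithin : ∀ v ∈ S, a ≤ start v ∧ start v + lat v ≤ b)
    (hres : ∀ t, #{v ∈ S | start v ≤ t ∧ t < start v + lat v} ≤ r) :
    ∑ v ∈ S, lat v ≤ (b - a) * r := by
  let executes : V → ℕ → Prop := fun v t => start v ≤ t ∧ t < start v + lat v
  have hcycles : ∀ v ∈ S, (Ico a b).bipartiteAbove executes v = Ico (start v) (start v + lat v) := by
    intro v hv
    ext t
    have := hwithin v hv
    simp only [mem_bipartiteAbove, mem_Ico, executes]
    omega
  calc ∑ v ∈ S, lat v = ∑ v ∈ S, #((Ico a b).bipartiteAbove executes v) :=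
        sum_congr rfl fun v hv => by rw [hcycles v hv, Nat.card_Ico]; omega
    _ = ∑ t ∈ Ico a b, #(S.bipartiteBelow executes t) :=
        sum_card_bipartiteAbove_eq_sum_card_bipartiteBelow executes
    _ ≤ #(Ico a b) • r := sum_le_card_nsmul _ _ _ fun t _ => hres t
    _ = (b - a) * r := by rw [Nat.card_Ico, smul_eq_mul]

variable [Fintype V] [Fintype Op] [DecidableEq Op] {typ : V → Op} {R : Op → ℕ}

theorem latLB_le_of_schedule (hR : ∀ o, 1 ≤ R o)
    (hwithin : ∀ v, a ≤ start v ∧ start v + lat v ≤ b)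
    (hE : ∀ v w, E v w → start v + lat v ≤ start w)
    (hres : ∀ t o, #{v | typ v = o ∧ start v ≤ t ∧ t < start v + lat v} ≤ R o) :
    latLB E lat typ R ≤ (b - a : ℕ) := by
  unfold latLB
  refine max_le (iSup_le fun k => iSup_le fun v => iSup_le fun hv => ?_) ?_
  · exact_mod_cast hv.sum_le_of_schedule hwithin hE
  · refine Nat.cast_le.mpr (Finset.sup_le fun o _ => ?_)
    have hwork : ∑ v with typ v = o, lat v ≤ (b - a) * R o :=
      sum_lat_le_mul_of_card_executing_le _ _ (fun v _ => hwithin v) fun t => by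
        simpa only [filter_filter] using hres t o
    rw [← Nat.ceilDiv_eq_add_pred_div, ceilDiv_le_iff_le_mul (hR o)]
    linarith

theorem latLB_le_latLB_of_embedding {V' : Type*} [Fintype V'] {E' : V' → V' → Prop}
    {lat' : V' → ℕ} {typ' : V' → Op} (φ : V → V') (hφinj : Function.Injective φ)
    (hφE : ∀ v w, E v w → E' (φ v) (φ w)) (hφlat : ∀ v, lat' (φ v) = lat v)
    (hφtyp : ∀ v, typ' (φ v) = typ v) :
    latLB E lat typ R ≤ latLB E' lat' typ' R := by
  unfold latLB
  refine max_le_max (iSup_le fun k => iSup_le fun v => iSup_le fun hv => ?_) ?_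
  · refine le_iSup_of_le k (le_iSup_of_le (φ ∘ v) (le_iSup_of_le (hv.map hφE) ?_))
    simp only [Function.comp_apply, hφlat, le_refl]
  · refine Nat.cast_le.mpr (Finset.sup_mono_fun fun o _ =>
      Nat.div_le_div_right (Nat.sub_le_sub_right (Nat.add_le_add_right ?_ _) _))
    calc ∑ v with typ v = o, lat v
        = ∑ v' ∈ ({v | typ v = o} : Finset V).map ⟨φ, hφinj⟩, lat' v' := by
          simp only [sum_map, Function.Embedding.coeFn_mk, hφlat]
      _ ≤ ∑ v' with typ' v' = o, lat' v' := sum_le_sum_of_subset fun v' hv' => by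
          obtain ⟨v, hv, rfl⟩ := mem_map.mp hv'
          simpa only [mem_filter_univ, Function.Embedding.coeFn_mk, hφtyp] using hv

end Schedule

theorem mul_le_sub_of_sequential {n D : ℕ} {s e : ℕ → ℕ} (hblock : ∀ g < n, D ≤ e g - s g)
    (hseq : ∀ g, g + 1 < n → e g ≤ s (g + 1)) : n * D ≤ e (n - 1) - s 0 := by
  -- `D ≤ e g - s g` says nothing about the order of `s g` and `e g` unless `0 < D`.
  rcases Nat.eq_zero_or_pos D with rfl | hD
  · simp
  have hprefix : ∀ g < n, s 0 + (g + 1) * D ≤ e g := by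
    intro g
    induction g with
    | zero => intro hg; have := hblock 0 hg; omega
    | succ g ih =>
      intro hg
      have := ih (by omega)
      have := hseq g hg
      have := hblock (g + 1) hg
      rw [add_mul, one_mul]
      omega
  rcases n with _ | m
  · simp
  · have := hprefix m (by omega)
    simp only [add_tsub_cancel_right]
    omega

theorem partially_unrolled_complex_body_latency_lower_bound_general
    {V V' Op : Type*} [Fintype V] [Fintype V'] [Fintype Op] [DecidableEq Op]
    (E : V → V → Prop) (E' : V' → V' → Prop)
    (lat : V → ℕ) (lat' : V' → ℕ) (typ : V → Op) (typ' : V' → Op)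
    (φ : V → V') (hφinj : Function.Injective φ)
    (hφE : ∀ v w, E v w → E' (φ v) (φ w))
    (hφlat : ∀ v, lat' (φ v) = lat v)
    (hφtyp : ∀ v, typ' (φ v) = typ v)
    (R : Op → ℕ) (hR : ∀ o, 1 ≤ R o)
    (TC UF : ℕ)
    (D : ℕ) (hD : (D : ℕ∞) = latLB E lat typ R)
    (s e : ℕ → ℕ) (start : ℕ → V' → ℕ)
    (hcontain : ∀ g < TC / UF, ∀ v' : V',
      s g ≤ start g v' ∧ start g v' + lat' v' ≤ e g)
    (hresp : ∀ g < TC / UF, ∀ v w, E' v w → start g v + lat' v ≤ start g w)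
    (hres : ∀ g < TC / UF, ∀ t o,
      ((Finset.univ.filter
          (fun v' => typ' v' = o ∧ start g v' ≤ t ∧ t < start g v' + lat' v')).card) ≤ R o)
    (hseq : ∀ g, g + 1 < TC / UF → e g ≤ s (g + 1)) :
    TC / UF * D ≤ e (TC / UF - 1) - s 0 := by
  refine mul_le_sub_of_sequential (fun g hg => ?_) hseq
  have hgroup : latLB E' lat' typ' R ≤ (e g - s g : ℕ) :=
    latLB_le_of_schedule hR (hcontain g hg) (hresp g hg) (hres g hg)
  exact_mod_cast hD ▸ (latLB_le_latLB_of_embedding φ hφinj hφE hφlat hφtyp).trans hgroup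

/-- **Minimal latency of a partially unrolled loop with factor UF and complex
loop bodies.**  A loop of trip count `TC` is partially unrolled with factor
`UF` (`1 ≤ UF ≤ TC`) and executed non-pipelined: its `n = ⌊TC / UF⌋` complete
groups run sequentially, each group `g` being a schedule `start g` of the
`UF`-fold replicated body `L' = (V', E', lat', typ')` that respects the
dependences `E'`, satisfies the resource constraint `R`, and is contained in
the interval `[s g, e g)`.  The single loop body `L = (V, E, lat, typ)` embeds
into `L'` via an injective map `φ` preserving dependence edges, latencies and
types, and `D` is the latency lower bound `LB(L)`.  Then the total latency is
at least `⌊TC / UF⌋ * D`. -/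
theorem partially_unrolled_complex_body_latency_lower_bound
    {V V' Op : Type*} [Fintype V] [Fintype V'] [Fintype Op] [DecidableEq Op]
    (E : V → V → Prop) (E' : V' → V' → Prop)
    (lat : V → ℕ) (lat' : V' → ℕ) (typ : V → Op) (typ' : V' → Op)
    (hlat : ∀ v, 1 ≤ lat v) (hlat' : ∀ v', 1 ≤ lat' v')
    (φ : V → V') (hφinj : Function.Injective φ)
    (hφE : ∀ v w, E v w → E' (φ v) (φ w))
    (hφlat : ∀ v, lat' (φ v) = lat v)
    (hφtyp : ∀ v, typ' (φ v) = typ v)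
    (R : Op → ℕ) (hR : ∀ o, 1 ≤ R o)
    (TC UF : ℕ) (hUF : 1 ≤ UF) (hUFTC : UF ≤ TC)
    (D : ℕ) (hD : (D : ℕ∞) = latLB E lat typ R)
    (s e : ℕ → ℕ) (start : ℕ → V' → ℕ)
    (hcontain : ∀ g < TC / UF, ∀ v' : V',
      s g ≤ start g v' ∧ start g v' + lat' v' ≤ e g)
    (hresp : ∀ g < TC / UF, ∀ v w, E' v w → start g v + lat' v ≤ start g w)
    (hres : ∀ g < TC / UF, ∀ t o,
      ((Finset.univ.filter
          (fun v' => typ' v' = o ∧ start g v' ≤ t ∧ t < start g v' + lat' v')).card) ≤ R o)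
    (hseq : ∀ g, g + 1 < TC / UF → e g ≤ s (g + 1)) :
    TC / UF * D ≤ e (TC / UF - 1) - s 0 :=
  partially_unrolled_complex_body_latency_lower_bound_general E E' lat lat' typ typ' φ hφinj hφE
    hφlat hφtyp R hR TC UF D hD s e start hcontain hresp hres hseq
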